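/- arXiv:2404.16623 — 2 statements merged into one kernel-verified Lean document; each statement's English description precedes it below -/
import Mathlib

section
/- Let n, L, c_LB be real numbers with n ≥ 2, c_LB > 0, L ≥ 8/c_LB, and L ≤ n, and set c := max(4, 16/c_LB). Let (S_k)_{k≥0} be a sequence of nonnegative real numbers with S_0 = 0 such that for every k, c_LB · (S_{k+1} − 1) · L ≤ 4n + 2·S_k + 2·S_{k+1}. Then S_k ≤ c·n/L for every k. -/
/-!
Write `x = c_LB · L ≥ 8` and `B = c n / L`. The recurrence reads
`(x - 2) S_{k+1} ≤ 4n + 2 S_k + x`, so `S_k ≤ B` propagates to `S_{k+1} ≤ B` as soon as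
`4n + 2B + x ≤ (x - 2) B`. Since `x - 4 ≥ x / 2`, the right side minus `2B` is at least
`c_LB c n / 2`; half of that covers `4n` because `c_LB c ≥ 16`, the other half covers
`x ≤ c_LB n` because `c ≥ 4`.
-/

theorem le_of_recurrence_of_absorbing {x m s t B : ℝ} (hx : 2 < x)
    (hB : m + 2 * B + x ≤ (x - 2) * B) (hs : s ≤ B) (hrec : x * (t - 1) ≤ m + 2 * s + 2 * t) :
    t ≤ B := by
  have hxt : (x - 2) * t ≤ (x - 2) * B := by linarith
  exact le_of_mul_le_mul_left hxt (by linarith)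

theorem rebuild_bound_absorbing {n L cLB c : ℝ} (hcLB : 0 < cLB) (hx : 8 ≤ cLB * L)
    (hLn : L ≤ n) (hc4 : 4 ≤ c) (hc16 : 16 ≤ cLB * c) :
    4 * n + 2 * (c * n / L) + cLB * L ≤ (cLB * L - 2) * (c * n / L) := by
  have hL : 0 < L := by nlinarith
  have hn : 0 ≤ n := by linarith
  have hB : 0 ≤ c * n / L := by positivity
  have half : cLB * c * n / 2 ≤ (cLB * L - 4) * (c * n / L) := by
    calc cLB * c * n / 2 = cLB * L / 2 * (c * n / L) := by field_simp
      _ ≤ (cLB * L - 4) * (c * n / L) := by gcongr; linarith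
  have h4n : 4 * n ≤ cLB * c * n / 4 := by nlinarith
  have hxn : cLB * L ≤ cLB * c * n / 4 := by nlinarith [mul_le_mul_of_nonneg_left hLn hcLB.le]
  linarith

theorem rebuild_length_bound_general
    (n L cLB : ℝ) (hcLB : 0 < cLB) (hL8 : 8 / cLB ≤ L) (hLn : L ≤ n)
    (c : ℝ) (hc : c = max 4 (16 / cLB))
    (S : ℕ → ℝ) (hS0 : S 0 = 0)
    (hrec : ∀ k, cLB * (S (k + 1) - 1) * L ≤ 4 * n + 2 * S k + 2 * S (k + 1)) :
    ∀ k, S k ≤ c * n / L := by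
  have hx : 8 ≤ cLB * L := by rwa [div_le_iff₀' hcLB] at hL8
  have hc4 : 4 ≤ c := hc ▸ le_max_left _ _
  have hc16 : 16 ≤ cLB * c := by rw [← div_le_iff₀' hcLB]; exact hc ▸ le_max_right _ _
  have hB := rebuild_bound_absorbing hcLB hx hLn hc4 hc16
  intro k
  induction k with
  | zero =>
    have hL : 0 < L := by nlinarith
    rw [hS0]; exact div_nonneg (by nlinarith) hL.le
  | succ k ih =>
    exact le_of_recurrence_of_absorbing (by linarith) hB ih (by linarith [hrec k])

/-- Arithmetic core of the rebuild-length lemma (Lemma 3): every rebuild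
involves at most `c * n / L` operations. -/
theorem rebuild_length_bound
    (n L cLB : ℝ) (hn : 2 ≤ n) (hcLB : 0 < cLB) (hL8 : 8 / cLB ≤ L) (hLn : L ≤ n)
    (c : ℝ) (hc : c = max 4 (16 / cLB))
    (S : ℕ → ℝ) (hS0 : S 0 = 0) (hSnonneg : ∀ k, 0 ≤ S k)
    (hrec : ∀ k, cLB * (S (k + 1) - 1) * L ≤ 4 * n + 2 * S k + 2 * S (k + 1)) :
    ∀ k, S k ≤ c * n / L :=
  rebuild_length_bound_general n L cLB hcLB hL8 hLn c hc S hS0 hrec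
end

section
/- Let n, L, c_LB be real numbers with n ≥ 2, c_LB > 0, L ≥ 8/c_LB, and L ≤ n, and set c := max(4, 16/c_LB). Suppose S_1 and S_2 are nonnegative real numbers such that S_1 ≤ c·n/L and c_LB · (S_2 − 1) · L ≤ 4n + 2·S_1 + 2·S_2. Then S_2 ≤ c·n/L. -/
/-!
Put `a = c_LB · L ≥ 8` and `T = c·n/L`. If `S₂ > T`, then `T ≥ 4` makes `S₂` positive, and
`a ≥ 8` lets `2·S₂` be absorbed into a quarter of the left-hand side `a·S₂`. Each remaining
term `4n`, `2·S₁` and `a` on the right is at most `a·T/4 = c·c_LB·n/4`, because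
`c·c_LB ≥ 16`, `a ≥ 8` and `c ≥ 4` respectively, which contradicts `S₂ > T`.
-/

theorem le_of_rebuild_cost_le {a n T S₁ S₂ : ℝ} (ha : 8 ≤ a) (hT : 4 ≤ T) (hn : 16 * n ≤ a * T)
    (hS₁ : S₁ ≤ T) (hcost : a * (S₂ - 1) ≤ 4 * n + 2 * S₁ + 2 * S₂) : S₂ ≤ T := by
  by_contra! hT_lt
  have hgrow : (a - 2) * T < (a - 2) * S₂ := mul_lt_mul_of_pos_left hT_lt (by linarith)
  nlinarith [mul_nonneg (sub_nonneg.2 ha) (by linarith : (0 : ℝ) ≤ T),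
    mul_nonneg (by linarith : (0 : ℝ) ≤ a) (sub_nonneg.2 hT)]

theorem rebuild_length_inductive_step_general
    (n L cLB : ℝ) (hcLB : 0 < cLB) (hL8 : 8 / cLB ≤ L) (hLn : L ≤ n)
    (c : ℝ) (hc : c = max 4 (16 / cLB))
    (S1 S2 : ℝ)
    (hS1 : S1 ≤ c * n / L)
    (hcost : cLB * (S2 - 1) * L ≤ 4 * n + 2 * S1 + 2 * S2) :
    S2 ≤ c * n / L := by
  have hL : 0 < L := (div_pos (by norm_num) hcLB).trans_le hL8
  have hc4 : 4 ≤ c := hc ▸ le_max_left _ _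
  have hc16 : 16 ≤ c * cLB := (div_le_iff₀ hcLB).1 (hc ▸ le_max_right _ _)
  have ha : 8 ≤ cLB * L := by linarith [(div_le_iff₀ hcLB).1 hL8]
  have hT : 4 ≤ c * n / L := by
    rw [le_div_iff₀ hL]
    nlinarith
  have hn : 16 * n ≤ cLB * L * (c * n / L) := by
    rw [mul_assoc, mul_div_cancel₀ _ hL.ne', ← mul_assoc, mul_comm cLB c]
    nlinarith
  exact le_of_rebuild_cost_le ha hT hn hS1 (by linarith)

/-- Inductive step of the rebuild-length lemma (Lemma 3): if the previous
rebuild involved at most `c * n / L` operations, then so does the current one. -/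
theorem rebuild_length_inductive_step
    (n L cLB : ℝ) (hn : 2 ≤ n) (hcLB : 0 < cLB) (hL8 : 8 / cLB ≤ L) (hLn : L ≤ n)
    (c : ℝ) (hc : c = max 4 (16 / cLB))
    (S1 S2 : ℝ) (hS1nonneg : 0 ≤ S1) (hS2nonneg : 0 ≤ S2)
    (hS1 : S1 ≤ c * n / L)
    (hcost : cLB * (S2 - 1) * L ≤ 4 * n + 2 * S1 + 2 * S2) :
    S2 ≤ c * n / L :=
  rebuild_length_inductive_step_general n L cLB hcLB hL8 hLn c hc S1 S2 hS1 hcost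
end
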